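/- Under the ROBE-Z embedding setup, if the two embedding segments θ_a and θ_b lie in different blocks (i.e., Z ≥ D, each segment {id_a,…,id_a+D−1} and {id_b,…,id_b+D−1} is contained in a single block, and these two blocks are distinct), then the embedding inner-product estimator has expectation E[ Ê(a,b) ] = ⟨θ_a, θ_b⟩ · (1 + 1/m), where ⟨θ_a, θ_b⟩ = Σ_{j=0}^{D−1} θ_{id_a+j} θ_{id_b+j}. -/
import Mathlib


open Finset

noncomputable section

/-- Sign value of a Boolean: `true ↦ +1`, `false ↦ -1`. -/
def sgn (b : Bool) : ℝ := if b then 1 else -1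

/-- The block id of an index `i` is a valid index into `Fin (n / Z)`. -/
theorem blockLt {n Z : ℕ} (hdvd : Z ∣ n) (i : Fin n) : i.1 / Z < n / Z :=
  Nat.div_lt_div_of_lt_of_dvd hdvd i.isLt

/-- ROBE-Z location map: `idx i = (h (⌊i/Z⌋) + (i mod Z)) mod m`. -/
def idx (n m Z : ℕ) (hdvd : Z ∣ n) (h : Fin (n / Z) → Fin m) (i : Fin n) : ℕ :=
  ((h ⟨i.1 / Z, blockLt hdvd i⟩).1 + i.1 % Z) % m

/-- Expectation with respect to the uniform (product) measure on the finite
sample space of pairs `(h, g)`. -/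
def expec (n m Z : ℕ) (f : ((Fin (n / Z) → Fin m) × (Fin n → Bool)) → ℝ) : ℝ :=
  (∑ ω : (Fin (n / Z) → Fin m) × (Fin n → Bool), f ω) /
    (Fintype.card ((Fin (n / Z) → Fin m) × (Fin n → Bool)))

/-- The ROBE-Z embedding inner-product estimator `Ê(a,b)` for the `D`-dimensional
embedding segments of the parameter vector `θ` starting at `ida` and `idb`,
as a function of the random sample `ω = (h, g)`. -/
def estEmb (n m Z D : ℕ) (hdvd : Z ∣ n) (θ : Fin n → ℝ) (ida idb : ℕ)
    (ha : ida + D ≤ n) (hb : idb + D ≤ n)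
    (ω : (Fin (n / Z) → Fin m) × (Fin n → Bool)) : ℝ :=
  ∑ j : Fin D,
    (∑ i : Fin n, θ i * sgn (ω.2 ⟨ida + j.1, by have := j.isLt; omega⟩) * sgn (ω.2 i) *
      (if idx n m Z hdvd ω.1 i =
          idx n m Z hdvd ω.1 ⟨ida + j.1, by have := j.isLt; omega⟩ then 1 else 0)) *
    (∑ i : Fin n, θ i * sgn (ω.2 ⟨idb + j.1, by have := j.isLt; omega⟩) * sgn (ω.2 i) *
      (if idx n m Z hdvd ω.1 i =
          idx n m Z hdvd ω.1 ⟨idb + j.1, by have := j.isLt; omega⟩ then 1 else 0))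

lemma sum_bool_pow (e : ℕ) :
    (∑ b : Bool, sgn b ^ e) = if Even e then (2:ℝ) else 0 := by
  rw [Fintype.sum_bool]
  rcases Nat.even_or_odd e with h | h
  · simp [sgn, h.neg_one_pow, h]; norm_num
  · simp [sgn, h.neg_one_pow, Nat.not_even_iff_odd.2 h]

lemma sum_sgn4 {n : ℕ} (x y i i' : Fin n) (hxy : x ≠ y) :
    ∑ g : Fin n → Bool, sgn (g x) * sgn (g y) * sgn (g i) * sgn (g i')
      = if (i = x ∧ i' = y) ∨ (i = y ∧ i' = x) then (2:ℝ)^n else 0 := by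
  classical
  set e : Fin n → ℕ := fun w =>
    (if w = x then 1 else 0) + (if w = y then 1 else 0) +
    (if w = i then 1 else 0) + (if w = i' then 1 else 0) with he
  have hfac : ∀ (g : Fin n → Bool) (z : Fin n),
      (∏ w : Fin n, if w = z then sgn (g w) else 1) = sgn (g z) := by
    intro g z
    rw [Finset.prod_ite_eq' Finset.univ z (fun w => sgn (g w))]
    simp
  have key : ∀ g : Fin n → Bool,
      sgn (g x) * sgn (g y) * sgn (g i) * sgn (g i') = ∏ w, sgn (g w) ^ e w := by
    intro g
    have : ∀ w : Fin n, sgn (g w) ^ e w =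
        (if w = x then sgn (g w) else 1) * (if w = y then sgn (g w) else 1) *
        (if w = i then sgn (g w) else 1) * (if w = i' then sgn (g w) else 1) := by
      intro w
      rw [he]
      simp only [pow_add]
      congr 1
      · congr 1
        · congr 1 <;> (split <;> simp)
        · split <;> simp
      · split <;> simp
    rw [Finset.prod_congr rfl (fun w _ => this w)]
    rw [Finset.prod_mul_distrib, Finset.prod_mul_distrib, Finset.prod_mul_distrib]
    rw [hfac, hfac, hfac, hfac]
  rw [Finset.sum_congr rfl (fun g _ => key g)]
  rw [← Fintype.prod_sum (fun w b => sgn b ^ e w)]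
  have heval : ∀ w : Fin n, (∑ b : Bool, sgn b ^ e w) = if Even (e w) then (2:ℝ) else 0 :=
    fun w => sum_bool_pow (e w)
  rw [Finset.prod_congr rfl (fun w _ => heval w)]
  by_cases hc : (i = x ∧ i' = y) ∨ (i = y ∧ i' = x)
  · rw [if_pos hc]
    have hev : ∀ w : Fin n, Even (e w) := by
      intro w
      rcases hc with ⟨h1, h2⟩ | ⟨h1, h2⟩ <;> subst h1 <;> subst h2 <;>
        · rw [he]; dsimp only; split_ifs <;> simp_all
    rw [Finset.prod_congr rfl (fun w _ => if_pos (hev w))]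
    simp
  · rw [if_neg hc]
    have : ∃ w : Fin n, ¬ Even (e w) := by
      by_cases hix : i = x
      · refine ⟨y, ?_⟩
        have h1 : i' ≠ y := fun h => hc (Or.inl ⟨hix, h⟩)
        have h2 : y ≠ x := hxy.symm
        have h3 : y ≠ i := by rw [hix]; exact hxy.symm
        have h4 : y ≠ i' := fun h => h1 h.symm
        simp [he, h2, h3, h4]
      · by_cases hi'x : i' = x
        · refine ⟨y, ?_⟩
          have h1 : i ≠ y := fun h => hc (Or.inr ⟨h, hi'x⟩)
          have h2 : y ≠ x := hxy.symm
          have h3 : y ≠ i := fun h => h1 h.symm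
          have h4 : y ≠ i' := by rw [hi'x]; exact hxy.symm
          simp [he, h2, h3, h4]
        · refine ⟨x, ?_⟩
          have h3 : x ≠ i := fun h => hix h.symm
          have h4 : x ≠ i' := fun h => hi'x h.symm
          simp [he, hxy, h3, h4]
    obtain ⟨w, hw⟩ := this
    exact Finset.prod_eq_zero (Finset.mem_univ w) (if_neg hw)

lemma sum_pair {ι : Type*} [Fintype ι] [DecidableEq ι] {m : ℕ} (A B : ι) (hBA : B ≠ A)
    (p : Fin m → Fin m → ℝ) :
    ∑ h : ι → Fin m, p (h A) (h B)
      = (Fintype.card ({ j : { j : ι // j ≠ A } // j ≠ (⟨B, hBA⟩ : { j : ι // j ≠ A }) } → Fin m) : ℝ)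
        * ∑ u : Fin m, ∑ v : Fin m, p u v := by
  classical
  rw [← Equiv.sum_comp (Equiv.funSplitAt A (Fin m)).symm (fun h => p (h A) (h B))]
  have h1 : ∀ q : Fin m × ({ j : ι // j ≠ A } → Fin m),
      ((Equiv.funSplitAt A (Fin m)).symm q) A = q.1 := by
    intro q; simp [Equiv.funSplitAt, Equiv.piSplitAt]
  have h2 : ∀ q : Fin m × ({ j : ι // j ≠ A } → Fin m),
      ((Equiv.funSplitAt A (Fin m)).symm q) B = q.2 ⟨B, hBA⟩ := by
    intro q; simp [Equiv.funSplitAt, Equiv.piSplitAt, hBA]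
  simp only [h1, h2]
  rw [Fintype.sum_prod_type]
  have inner : ∀ u : Fin m,
      ∑ k : ({ j : ι // j ≠ A } → Fin m), p u (k ⟨B, hBA⟩)
        = (Fintype.card ({ j : { j : ι // j ≠ A } // j ≠ (⟨B, hBA⟩ : { j : ι // j ≠ A }) } → Fin m) : ℝ)
          * ∑ v : Fin m, p u v := by
    intro u
    rw [← Equiv.sum_comp (Equiv.funSplitAt (⟨B, hBA⟩ : { j : ι // j ≠ A }) (Fin m)).symm
      (fun k => p u (k ⟨B, hBA⟩))]
    have h3 : ∀ q : Fin m × ({ j : { j : ι // j ≠ A } // j ≠ (⟨B, hBA⟩ : { j : ι // j ≠ A }) } → Fin m),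
        ((Equiv.funSplitAt (⟨B, hBA⟩ : { j : ι // j ≠ A }) (Fin m)).symm q) ⟨B, hBA⟩ = q.1 := by
      intro q; simp [Equiv.funSplitAt, Equiv.piSplitAt]
    simp only [h3]
    rw [Fintype.sum_prod_type]
    simp [Finset.sum_const, mul_comm, Finset.mul_sum]
    rw [Finset.sum_mul]
  rw [Finset.sum_congr rfl (fun u _ => inner u), ← Finset.mul_sum]

lemma sum_mod_count {m : ℕ} (hm : 0 < m) (r t : ℕ) (ht : t < m) :
    ∑ v : Fin m, (if (v.1 + r) % m = t then (1:ℝ) else 0) = 1 := by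
  haveI : NeZero m := ⟨hm.ne'⟩
  set c : Fin m := ⟨r % m, Nat.mod_lt r hm⟩ with hc
  have hval : ∀ v : Fin m, (v.1 + r) % m = ((v + c : Fin m)).1 := by
    intro v
    rw [Fin.add_def]
    simp [hc, Nat.add_mod, Nat.mod_eq_of_lt v.isLt]
  calc ∑ v : Fin m, (if (v.1 + r) % m = t then (1:ℝ) else 0)
      = ∑ v : Fin m, (if ((Equiv.addRight c) v).1 = t then (1:ℝ) else 0) := by
        refine Finset.sum_congr rfl fun v _ => ?_
        rw [hval v]; rfl
    _ = ∑ w : Fin m, (if w.1 = t then (1:ℝ) else 0) :=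
        Equiv.sum_comp (Equiv.addRight c) (fun w : Fin m => if w.1 = t then (1:ℝ) else 0)
    _ = 1 := by
        have : ∀ w : Fin m, (if w.1 = t then (1:ℝ) else 0) = (if w = ⟨t, ht⟩ then (1:ℝ) else 0) := by
          intro w; simp [Fin.ext_iff]
        rw [Finset.sum_congr rfl (fun w _ => this w)]
        simp

lemma inner_g_sum {n : ℕ} (θ : Fin n → ℝ) (q : Fin n → ℕ) (x y : Fin n) (hxy : x ≠ y) :
    ∑ g : Fin n → Bool,
      (∑ i : Fin n, θ i * sgn (g x) * sgn (g i) * (if q i = q x then 1 else 0)) *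
      (∑ i : Fin n, θ i * sgn (g y) * sgn (g i) * (if q i = q y then 1 else 0))
    = 2^n * (θ x * θ y) * (1 + if q x = q y then 1 else 0) := by
  classical
  have step1 : ∀ g : Fin n → Bool,
      (∑ i : Fin n, θ i * sgn (g x) * sgn (g i) * (if q i = q x then 1 else 0)) *
      (∑ i : Fin n, θ i * sgn (g y) * sgn (g i) * (if q i = q y then 1 else 0))
      = ∑ i : Fin n, ∑ i' : Fin n,
          (θ i * sgn (g x) * sgn (g i) * (if q i = q x then 1 else 0)) *
          (θ i' * sgn (g y) * sgn (g i') * (if q i' = q y then 1 else 0)) := by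
    intro g; rw [Finset.sum_mul_sum]
  rw [Finset.sum_congr rfl (fun g _ => step1 g)]
  rw [Finset.sum_comm]
  rw [Finset.sum_congr rfl (fun i _ => Finset.sum_comm)]
  have step2 : ∀ i i' : Fin n,
      ∑ g : Fin n → Bool,
        (θ i * sgn (g x) * sgn (g i) * (if q i = q x then 1 else 0)) *
        (θ i' * sgn (g y) * sgn (g i') * (if q i' = q y then 1 else 0))
      = (θ i * θ i' * (if q i = q x then 1 else 0) * (if q i' = q y then 1 else 0)) *
          (if (i = x ∧ i' = y) ∨ (i = y ∧ i' = x) then (2:ℝ)^n else 0) := by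
    intro i i'
    rw [← sum_sgn4 x y i i' hxy, Finset.mul_sum]
    exact Finset.sum_congr rfl fun g _ => by ring
  rw [Finset.sum_congr rfl (fun i _ => Finset.sum_congr rfl (fun i' _ => step2 i i'))]
  rw [← Fintype.sum_prod_type']
  rw [Finset.sum_eq_add_of_mem (x, y) (y, x) (Finset.mem_univ _) (Finset.mem_univ _)
    (by simp [Prod.ext_iff]; exact fun h _ => hxy h)
    (by
      rintro ⟨i, i'⟩ _ ⟨hne1, hne2⟩
      have : ¬ ((i = x ∧ i' = y) ∨ (i = y ∧ i' = x)) := by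
        rintro (⟨rfl, rfl⟩ | ⟨rfl, rfl⟩)
        · exact hne1 rfl
        · exact hne2 rfl
      rw [if_neg this, mul_zero])]
  rw [if_pos (show (x = x ∧ y = y) ∨ (x = y ∧ y = x) from Or.inl ⟨rfl, rfl⟩),
      if_pos (show (y = x ∧ x = y) ∨ (y = y ∧ x = x) from Or.inr ⟨rfl, rfl⟩)]
  by_cases hq : q x = q y
  · simp [hq]; ring
  · simp [hq, show ¬ q y = q x from fun h => hq h.symm]; ring

/-- If the two embedding segments lie in different blocks
(each segment contained in a single block, and the two blocks distinct), then
the embedding inner-product estimator has expectation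
`E[Ê(a,b)] = ⟨θ_a, θ_b⟩ · (1 + 1/m)`. -/
theorem robe_embedding_expectation_different_blocks (n m Z D : ℕ)
    (hn : 0 < n) (hm : 0 < m) (hZ : 0 < Z) (hD : 0 < D)
    (hdvd : Z ∣ n) (hDZ : D ≤ Z) (hZm : Z ≤ m) (hmn : m ≤ n)
    (θ : Fin n → ℝ) (ida idb : ℕ) (ha : ida + D ≤ n) (hb : idb + D ≤ n)
    (hdisj : ∀ j k : ℕ, j < D → k < D → ida + j ≠ idb + k)
    (hca : ∀ j : ℕ, j < D → (ida + j) / Z = ida / Z)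
    (hcb : ∀ j : ℕ, j < D → (idb + j) / Z = idb / Z)
    (hdiff : ida / Z ≠ idb / Z) :
    expec n m Z (estEmb n m Z D hdvd θ ida idb ha hb) =
      (∑ j : Fin D, θ ⟨ida + j.1, by have := j.isLt; omega⟩ *
        θ ⟨idb + j.1, by have := j.isLt; omega⟩) * (1 + 1 / (m : ℝ)) := by
  classical
  haveI : NeZero m := ⟨hm.ne'⟩
  have hxlt : ∀ j : Fin D, ida + j.1 < n := fun j => by have := j.isLt; omega
  have hylt : ∀ j : Fin D, idb + j.1 < n := fun j => by have := j.isLt; omega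
  have hAlt : ida / Z < n / Z := Nat.div_lt_div_of_lt_of_dvd hdvd (by omega)
  have hBlt : idb / Z < n / Z := Nat.div_lt_div_of_lt_of_dvd hdvd (by omega)
  set A : Fin (n/Z) := ⟨ida / Z, hAlt⟩ with hAdef
  set B : Fin (n/Z) := ⟨idb / Z, hBlt⟩ with hBdef
  have hBA : B ≠ A := by
    simp only [hAdef, hBdef, Ne, Fin.mk.injEq]
    exact fun h => hdiff h.symm
  set K : ℝ := (Fintype.card
    ({ j : { j : Fin (n/Z) // j ≠ A } // j ≠ (⟨B, hBA⟩ : { j : Fin (n/Z) // j ≠ A }) } → Fin m) : ℝ)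
    with hKdef
  have hK0 : K ≠ 0 := by
    have : 0 < Fintype.card
        ({ j : { j : Fin (n/Z) // j ≠ A } // j ≠ (⟨B, hBA⟩ : { j : Fin (n/Z) // j ≠ A }) } → Fin m) :=
      Fintype.card_pos_iff.mpr ⟨fun _ => ⟨0, hm⟩⟩
    rw [hKdef]
    exact_mod_cast this.ne'
  have hcardH : ((Fintype.card (Fin (n/Z) → Fin m)) : ℝ) = K * ((m:ℝ) * m) := by
    calc ((Fintype.card (Fin (n/Z) → Fin m)) : ℝ)
        = ∑ _h : Fin (n/Z) → Fin m, (1:ℝ) := by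
          rw [Finset.sum_const, Finset.card_univ, nsmul_eq_mul, mul_one]
      _ = K * ∑ _u : Fin m, ∑ _v : Fin m, (1:ℝ) := sum_pair A B hBA (fun _ _ => (1:ℝ))
      _ = K * ((m:ℝ) * m) := by
          simp [Finset.sum_const, Finset.card_univ, mul_comm]
  -- the key per-j computation
  have key : ∀ j : Fin D,
      ∑ h : Fin (n / Z) → Fin m, ∑ g : Fin n → Bool,
        (∑ i : Fin n, θ i * sgn (g ⟨ida + j.1, hxlt j⟩) * sgn (g i) *
          (if idx n m Z hdvd h i = idx n m Z hdvd h ⟨ida + j.1, hxlt j⟩ then 1 else 0)) *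
        (∑ i : Fin n, θ i * sgn (g ⟨idb + j.1, hylt j⟩) * sgn (g i) *
          (if idx n m Z hdvd h i = idx n m Z hdvd h ⟨idb + j.1, hylt j⟩ then 1 else 0))
      = (θ ⟨ida + j.1, hxlt j⟩ * θ ⟨idb + j.1, hylt j⟩) *
          ((2:ℝ)^n * (K * ((m:ℝ) * m) + K * m)) := by
    intro j
    have hne : (⟨ida + j.1, hxlt j⟩ : Fin n) ≠ ⟨idb + j.1, hylt j⟩ := by
      simp only [Ne, Fin.mk.injEq]
      exact hdisj j.1 j.1 j.2 j.2
    have hg : ∀ h : Fin (n / Z) → Fin m,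
        (∑ g : Fin n → Bool,
          (∑ i : Fin n, θ i * sgn (g ⟨ida + j.1, hxlt j⟩) * sgn (g i) *
            (if idx n m Z hdvd h i = idx n m Z hdvd h ⟨ida + j.1, hxlt j⟩ then 1 else 0)) *
          (∑ i : Fin n, θ i * sgn (g ⟨idb + j.1, hylt j⟩) * sgn (g i) *
            (if idx n m Z hdvd h i = idx n m Z hdvd h ⟨idb + j.1, hylt j⟩ then 1 else 0)))
        = (2:ℝ)^n * (θ ⟨ida + j.1, hxlt j⟩ * θ ⟨idb + j.1, hylt j⟩) *
            (1 + if idx n m Z hdvd h ⟨ida + j.1, hxlt j⟩ = idx n m Z hdvd h ⟨idb + j.1, hylt j⟩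
              then 1 else 0) :=
      fun h => inner_g_sum θ (idx n m Z hdvd h) _ _ hne
    rw [Finset.sum_congr rfl (fun h _ => hg h)]
    have hidx : ∀ h : Fin (n / Z) → Fin m,
        (if idx n m Z hdvd h ⟨ida + j.1, hxlt j⟩ = idx n m Z hdvd h ⟨idb + j.1, hylt j⟩
          then (1:ℝ) else 0)
        = (if ((h A).1 + (ida + j.1) % Z) % m = ((h B).1 + (idb + j.1) % Z) % m
          then (1:ℝ) else 0) := by
      intro h
      have e1 : (⟨(ida + j.1) / Z, blockLt hdvd ⟨ida + j.1, hxlt j⟩⟩ : Fin (n/Z)) = A :=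
        Fin.ext (hca j.1 j.2)
      have e2 : (⟨(idb + j.1) / Z, blockLt hdvd ⟨idb + j.1, hylt j⟩⟩ : Fin (n/Z)) = B :=
        Fin.ext (hcb j.1 j.2)
      simp only [idx, e1, e2]
    rw [Finset.sum_congr rfl (fun h _ => by rw [hidx h])]
    rw [← Finset.mul_sum]
    have hsplit : ∑ h : Fin (n / Z) → Fin m,
        (1 + if ((h A).1 + (ida + j.1) % Z) % m = ((h B).1 + (idb + j.1) % Z) % m
          then (1:ℝ) else 0)
        = K * ((m:ℝ) * m) + K * m := by
      rw [Finset.sum_add_distrib]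
      congr 1
      · rw [Finset.sum_const, Finset.card_univ, nsmul_eq_mul, mul_one, hcardH]
      · rw [sum_pair A B hBA
          (fun u v => if (u.1 + (ida + j.1) % Z) % m = (v.1 + (idb + j.1) % Z) % m
            then (1:ℝ) else 0)]
        have hin : ∀ u : Fin m,
            ∑ v : Fin m, (if (u.1 + (ida + j.1) % Z) % m = (v.1 + (idb + j.1) % Z) % m
              then (1:ℝ) else 0) = 1 := by
          intro u
          rw [Finset.sum_congr rfl (fun v _ =>
            if_congr (eq_comm :
              ((u.1 + (ida + j.1) % Z) % m = (v.1 + (idb + j.1) % Z) % m) ↔ _) rfl rfl)]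
          exact sum_mod_count hm ((idb + j.1) % Z) ((u.1 + (ida + j.1) % Z) % m)
            (Nat.mod_lt _ hm)
        rw [Finset.sum_congr rfl (fun u _ => hin u)]
        rw [Finset.sum_const, Finset.card_univ, nsmul_eq_mul, mul_one, Fintype.card_fin]
    rw [hsplit]
    ring
  -- assemble
  have hnum : (∑ ω : (Fin (n / Z) → Fin m) × (Fin n → Bool),
      estEmb n m Z D hdvd θ ida idb ha hb ω)
      = (∑ j : Fin D, θ ⟨ida + j.1, hxlt j⟩ * θ ⟨idb + j.1, hylt j⟩) *
          ((2:ℝ)^n * (K * ((m:ℝ) * m) + K * m)) := by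
    rw [Fintype.sum_prod_type]
    simp only [estEmb]
    rw [Finset.sum_congr rfl (fun h _ => Finset.sum_comm)]
    rw [Finset.sum_comm]
    rw [Finset.sum_congr rfl (fun j _ => key j)]
    rw [← Finset.sum_mul]
  have hden : ((Fintype.card ((Fin (n / Z) → Fin m) × (Fin n → Bool))) : ℝ)
      = (K * ((m:ℝ) * m)) * (2:ℝ)^n := by
    rw [Fintype.card_prod]
    push_cast
    rw [hcardH]
    congr 1
    rw [Fintype.card_fun]
    simp
  have hexp : expec n m Z (estEmb n m Z D hdvd θ ida idb ha hb)
      = (∑ ω : (Fin (n / Z) → Fin m) × (Fin n → Bool),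
          estEmb n m Z D hdvd θ ida idb ha hb ω) /
        ((Fintype.card ((Fin (n / Z) → Fin m) × (Fin n → Bool))) : ℝ) := rfl
  rw [hexp, hnum, hden]
  have hm' : (m:ℝ) ≠ 0 := Nat.cast_ne_zero.mpr hm.ne'
  have h2 : (2:ℝ)^n ≠ 0 := by positivity
  field_simp
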